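/- Let A ∈ ℝ^{m×N} satisfy the standard null space property 1-NSP(k,k,C_k) with C_k < 1. Then for every k-sparse vector x supported on a set T, and for every support estimate T̃ with accuracy α := |T ∩ T̃|/|T̃| ≥ 1/2 and |(T̃ ∩ Tᶜ) ∪ (T̃ᶜ ∩ T)| ≤ k, the vector x is the unique minimizer of the weighted ℓ1 problem with any weight 0 ≤ w < 1. -/
import Mathlib


open Finset

/-- ℓ1 norm of the restriction of `h` to the index set `T`. -/
def l1 {N : ℕ} (h : Fin N → ℝ) (T : Finset (Fin N)) : ℝ := ∑ i ∈ T, |h i|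

/-- The weighted null space property w-NSP(k,s,C). -/
def WNSP {m N : ℕ} (A : Matrix (Fin m) (Fin N) ℝ) (w : ℝ) (k s : ℕ) (C : ℝ) : Prop :=
  ∀ h : Fin N → ℝ, A.mulVec h = 0 →
    ∀ T S : Finset (Fin N), T.card ≤ k → S.card ≤ s →
      w * l1 h T + (1 - w) * l1 h S ≤ C * l1 h Tᶜ

/-- The weighted ℓ1 objective with weight `w` on the support estimate `Ttil`. -/
def wObj {N : ℕ} (w : ℝ) (Ttil : Finset (Fin N)) (z : Fin N → ℝ) : ℝ :=
  w * l1 z Ttil + l1 z Ttilᶜ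

/-- `x` is the unique minimizer of the weighted ℓ1 problem with measurements `A x`. -/
def UniqueMin {m N : ℕ} (A : Matrix (Fin m) (Fin N) ℝ) (w : ℝ) (Ttil : Finset (Fin N))
    (x : Fin N → ℝ) : Prop :=
  ∀ z : Fin N → ℝ, A.mulVec z = A.mulVec x → z ≠ x → wObj w Ttil x < wObj w Ttil z

/-- The support of a vector as a finset. -/
noncomputable def supp {N : ℕ} (x : Fin N → ℝ) : Finset (Fin N) := Finset.univ.filter (fun i => x i ≠ 0)

lemma l1_nonneg {N : ℕ} (h : Fin N → ℝ) (T : Finset (Fin N)) : 0 ≤ l1 h T :=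
  Finset.sum_nonneg fun _ _ => abs_nonneg _

lemma l1_split {N : ℕ} (h : Fin N → ℝ) (s t : Finset (Fin N)) :
    l1 h s = l1 h (s ∩ t) + l1 h (s ∩ tᶜ) := by
  have e : s \ t = s ∩ tᶜ := sdiff_eq
  unfold l1
  rw [← Finset.sum_inter_add_sum_sdiff s t (fun i => |h i|), e]

set_option maxHeartbeats 1000000 in
theorem stmt5 {m N : ℕ} (A : Matrix (Fin m) (Fin N) ℝ) (k : ℕ) (Ck : ℝ) (hCk : Ck < 1)
    (hA : WNSP A 1 k k Ck)
    (x : Fin N → ℝ) (T : Finset (Fin N)) (hT : supp x ⊆ T) (hk : T.card ≤ k)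
    (Ttil : Finset (Fin N))
    (hacc : (Ttil.card : ℝ) ≤ 2 * ((T ∩ Ttil).card : ℝ))
    (herr : ((Ttil ∩ Tᶜ) ∪ (Ttilᶜ ∩ T)).card ≤ k)
    (w : ℝ) (hw0 : 0 ≤ w) (hw1 : w < 1) :
    UniqueMin A w Ttil x := by
  intro z hz hne
  set h : Fin N → ℝ := z - x with hhdef
  have hAh : A.mulVec h = 0 := by
    rw [hhdef, Matrix.mulVec_sub, hz, sub_self]
  have hx0 : ∀ i ∈ Tᶜ, x i = 0 := by
    intro i hi
    by_contra hxi
    exact (Finset.mem_compl.mp hi) (hT (Finset.mem_filter.mpr ⟨Finset.mem_univ i, hxi⟩))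
  have hzc : ∀ i ∈ Tᶜ, z i = h i := by
    intro i hi; simp [hhdef, hx0 i hi]
  -- NSP applied to T and to the error set S
  set S : Finset (Fin N) := (Ttil ∩ Tᶜ) ∪ (Ttilᶜ ∩ T) with hSdef
  have hNT : l1 h T ≤ Ck * l1 h Tᶜ := by
    have := hA h hAh T ∅ hk (by simp)
    simpa using this
  have hNS : l1 h S ≤ Ck * l1 h Sᶜ := by
    have := hA h hAh S ∅ herr (by simp)
    simpa using this
  -- positivity of l1 h Tᶜ
  have hE : 0 < l1 h Tᶜ := by
    rcases lt_or_eq_of_le (l1_nonneg h Tᶜ) with hpos | heq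
    · exact hpos
    have hE0 : l1 h Tᶜ = 0 := heq.symm
    have hT0 : l1 h T = 0 :=
      le_antisymm (by rw [hE0] at hNT; linarith [hNT]) (l1_nonneg h T)
    have hzero : ∀ i, h i = 0 := by
      intro i
      by_cases hiT : i ∈ T
      · have := (Finset.sum_eq_zero_iff_of_nonneg (fun j _ => abs_nonneg (h j))).mp hT0 i hiT
        exact abs_eq_zero.mp this
      · have hiTc : i ∈ Tᶜ := Finset.mem_compl.mpr hiT
        have := (Finset.sum_eq_zero_iff_of_nonneg (fun j _ => abs_nonneg (h j))).mp hE0 i hiTc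
        exact abs_eq_zero.mp this
    apply absurd hne
    simp only [not_not]
    funext i
    have := hzero i
    simp [hhdef] at this
    linarith
  -- abbreviations for pieces
  set a := l1 h (Ttil ∩ T) with ha
  set b := l1 h (Ttil ∩ Tᶜ) with hb
  set c := l1 h (Ttilᶜ ∩ T) with hc
  set d := l1 h (Ttilᶜ ∩ Tᶜ) with hd
  -- splits
  have hsplT : l1 h T = a + c := by
    rw [l1_split h T Ttil, ha, hc, Finset.inter_comm T Ttil, Finset.inter_comm T Ttilᶜ]
  have hsplTc : l1 h Tᶜ = b + d := by
    rw [l1_split h Tᶜ Ttil, hb, hd, Finset.inter_comm Tᶜ Ttil, Finset.inter_comm Tᶜ Ttilᶜ]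
  have hsplS : l1 h S = b + c := by
    rw [hb, hc, hSdef]
    have hdisj : Disjoint (Ttil ∩ Tᶜ) (Ttilᶜ ∩ T) :=
      Finset.disjoint_left.mpr (by
        intro i hi1 hi2
        exact (Finset.mem_compl.mp (Finset.mem_inter.mp hi2).1) (Finset.mem_inter.mp hi1).1)
    unfold l1
    exact Finset.sum_union hdisj
  have hsplSc : l1 h Sᶜ = a + d := by
    have hScEq : Sᶜ = (Ttil ∩ T) ∪ (Ttilᶜ ∩ Tᶜ) := by
      ext i
      simp only [hSdef, Finset.mem_compl, Finset.mem_union, Finset.mem_inter]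
      tauto
    rw [ha, hd, hScEq]
    have hdisj2 : Disjoint (Ttil ∩ T) (Ttilᶜ ∩ Tᶜ) :=
      Finset.disjoint_left.mpr (by
        intro i hi1 hi2
        exact (Finset.mem_compl.mp (Finset.mem_inter.mp hi2).1) (Finset.mem_inter.mp hi1).1)
    unfold l1
    exact Finset.sum_union hdisj2
  -- compare objective pieces
  have hz_til_T : l1 x (Ttil ∩ T) - a ≤ l1 z (Ttil ∩ T) := by
    unfold l1
    rw [ha]; unfold l1
    rw [← Finset.sum_sub_distrib]
    apply Finset.sum_le_sum
    intro i _
    have : |x i| - |h i| ≤ |x i + h i| := by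
      have := abs_sub_abs_le_abs_sub (x i) (-(h i))
      simpa [sub_neg_eq_add] using this
    have hzi : z i = x i + h i := by simp [hhdef]
    rw [hzi]; exact this
  have hz_til_Tc : l1 z (Ttil ∩ Tᶜ) = b := by
    rw [hb]; unfold l1
    apply Finset.sum_congr rfl
    intro i hi
    rw [hzc i (Finset.mem_inter.mp hi).2]
  have hz_tilc_T : l1 x (Ttilᶜ ∩ T) - c ≤ l1 z (Ttilᶜ ∩ T) := by
    unfold l1
    rw [hc]; unfold l1
    rw [← Finset.sum_sub_distrib]
    apply Finset.sum_le_sum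
    intro i _
    have : |x i| - |h i| ≤ |x i + h i| := by
      have := abs_sub_abs_le_abs_sub (x i) (-(h i))
      simpa [sub_neg_eq_add] using this
    have hzi : z i = x i + h i := by simp [hhdef]
    rw [hzi]; exact this
  have hz_tilc_Tc : l1 z (Ttilᶜ ∩ Tᶜ) = d := by
    rw [hd]; unfold l1
    apply Finset.sum_congr rfl
    intro i hi
    rw [hzc i (Finset.mem_inter.mp hi).2]
  have hx_til_Tc : l1 x (Ttil ∩ Tᶜ) = 0 := by
    unfold l1
    apply Finset.sum_eq_zero
    intro i hi
    rw [hx0 i (Finset.mem_inter.mp hi).2, abs_zero]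
  have hx_tilc_Tc : l1 x (Ttilᶜ ∩ Tᶜ) = 0 := by
    unfold l1
    apply Finset.sum_eq_zero
    intro i hi
    rw [hx0 i (Finset.mem_inter.mp hi).2, abs_zero]
  -- objective splits
  have hOz : wObj w Ttil z = w * (l1 z (Ttil ∩ T) + l1 z (Ttil ∩ Tᶜ))
      + (l1 z (Ttilᶜ ∩ T) + l1 z (Ttilᶜ ∩ Tᶜ)) := by
    rw [wObj, l1_split z Ttil T, l1_split z Ttilᶜ T]
  have hOx : wObj w Ttil x = w * l1 x (Ttil ∩ T) + l1 x (Ttilᶜ ∩ T) := by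
    rw [wObj, l1_split x Ttil T, l1_split x Ttilᶜ T, hx_til_Tc, hx_tilc_Tc]
    ring
  rw [hOz, hOx, hz_til_Tc, hz_tilc_Tc]
  rw [hsplT, hsplTc] at hNT
  rw [hsplS, hsplSc] at hNS
  rw [hsplTc] at hE
  have ha0 : 0 ≤ a := l1_nonneg _ _
  have hb0 : 0 ≤ b := l1_nonneg _ _
  have hc0 : 0 ≤ c := l1_nonneg _ _
  have hd0 : 0 ≤ d := l1_nonneg _ _
  have had : 0 < a + d := by
    rcases lt_or_ge 0 (a + d) with h' | h'
    · exact h'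
    · have ha' : a = 0 := le_antisymm (by linarith) ha0
      have hd' : d = 0 := le_antisymm (by linarith) hd0
      have hck0 : Ck * (a + d) = 0 := by rw [ha', hd']; ring
      linarith
  have hP1 : a + c < b + d := by nlinarith
  have hP2 : b + c < a + d := by nlinarith
  nlinarith [mul_pos (by linarith : (0:ℝ) < 1 + w) (by linarith : (0:ℝ) < b + d - (a + c)),
    mul_pos (by linarith : (0:ℝ) < 1 - w) (by linarith : (0:ℝ) < a + d - (b + c)),
    mul_le_mul_of_nonneg_left hz_til_T hw0, hz_tilc_T]
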